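/- arXiv:2210.10283 — 2 statements merged into one kernel-verified Lean document; each statement's English description precedes it below -/
import Mathlib

section
/- For any Schwartz function f on ℝ (one dimension), there exists an absolute constant C such that the L¹ norm of f is bounded by C times the square root of the product of ‖x f(x)‖_{L²(ℝ)} and ‖f‖_{L²(ℝ)}. -/
open MeasureTheory Real

/-- One-dimensional weighted interpolation inequality:
`‖f‖_{L¹(ℝ)} ≤ C √(‖x f‖_{L²} ‖f‖_{L²})` for Schwartz `f`. -/
theorem stmt2 : ∃ C > 0, ∀ f : SchwartzMap ℝ ℝ,
    (∫ x, ‖f x‖) ≤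
      C * Real.sqrt (((∫ x, (|x| * ‖f x‖) ^ 2) ^ ((1 : ℝ) / 2)) *
        ((∫ x, ‖f x‖ ^ 2) ^ ((1 : ℝ) / 2))) := by
  refine ⟨Real.sqrt (2 * π), Real.sqrt_pos.mpr (by positivity), fun f => ?_⟩
  have hcont : Continuous f := f.continuous
  have hIntf : Integrable (fun x : ℝ => ‖f x‖) := f.integrable.norm
  have hIntx : Integrable (fun x : ℝ => |x| * ‖f x‖) := by
    simpa [Real.norm_eq_abs] using f.integrable_pow_mul volume 1
  set M0 : ℝ := SchwartzMap.seminorm ℝ 0 0 f with hM0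
  set M1 : ℝ := SchwartzMap.seminorm ℝ 1 0 f with hM1
  have hb0 : ∀ x : ℝ, ‖f x‖ ≤ M0 := fun x => by
    simpa [norm_iteratedFDeriv_zero] using SchwartzMap.le_seminorm ℝ 0 0 f x
  have hb1 : ∀ x : ℝ, |x| * ‖f x‖ ≤ M1 := fun x => by
    simpa [norm_iteratedFDeriv_zero, Real.norm_eq_abs] using SchwartzMap.le_seminorm ℝ 1 0 f x
  have hI2 : Integrable (fun x : ℝ => ‖f x‖ ^ 2) := by
    refine (hIntf.const_mul M0).mono' ((hcont.norm.pow 2).aestronglyMeasurable) ?_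
    filter_upwards with x
    have h1 := hb0 x
    have h2 : (0:ℝ) ≤ ‖f x‖ := norm_nonneg _
    rw [Real.norm_of_nonneg (by positivity)]
    nlinarith
  have hI3 : Integrable (fun x : ℝ => (|x| * ‖f x‖) ^ 2) := by
    refine (hIntx.const_mul M1).mono'
      (((continuous_abs.mul hcont.norm).pow 2).aestronglyMeasurable) ?_
    filter_upwards with x
    have h1 := hb1 x
    have h2 : (0:ℝ) ≤ |x| * ‖f x‖ := by positivity
    rw [Real.norm_of_nonneg (by positivity)]
    nlinarith
  set A2 : ℝ := ∫ x, (|x| * ‖f x‖) ^ 2 with hA2def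
  set B2 : ℝ := ∫ x, ‖f x‖ ^ 2 with hB2def
  have hA2nn : 0 ≤ A2 := integral_nonneg fun x => by positivity
  have hB2nn : 0 ≤ B2 := integral_nonneg fun x => by positivity
  by_cases hB : B2 = 0
  · -- degenerate case: f = 0 a.e.
    have h0 : (fun x : ℝ => ‖f x‖ ^ 2) =ᵐ[volume] 0 :=
      (integral_eq_zero_iff_of_nonneg (fun x => by positivity) hI2).mp hB
    have h0' : (fun x : ℝ => ‖f x‖) =ᵐ[volume] 0 := by
      filter_upwards [h0] with x hx
      have : ‖f x‖ ^ 2 = 0 := hx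
      exact pow_eq_zero_iff (n := 2) (by norm_num) |>.mp this
    rw [integral_congr_ae h0']
    simp only [Pi.zero_apply, integral_zero]
    exact mul_nonneg (Real.sqrt_nonneg _) (Real.sqrt_nonneg _)
  · have hB2pos : 0 < B2 := lt_of_le_of_ne hB2nn (Ne.symm hB)
    have hA2pos : 0 < A2 := by
      rcases lt_or_eq_of_le hA2nn with h | h
      · exact h
      · exfalso
        have h0 : (fun x : ℝ => (|x| * ‖f x‖) ^ 2) =ᵐ[volume] 0 :=
          (integral_eq_zero_iff_of_nonneg (fun x => by positivity) hI3).mp h.symm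
        have hne : ∀ᵐ x : ℝ, x ≠ 0 := by
          refine ae_iff.mpr ?_
          have : {a : ℝ | ¬ a ≠ 0} = {0} := by ext a; simp
          rw [this]; exact measure_singleton 0
        have h0' : (fun x : ℝ => ‖f x‖ ^ 2) =ᵐ[volume] 0 := by
          filter_upwards [h0, hne] with x hx hxne
          have : (|x| * ‖f x‖) ^ 2 = 0 := hx
          have hx0 : |x| * ‖f x‖ = 0 := by
            simpa using pow_eq_zero_iff (n := 2) (by norm_num) |>.mp this
          have : ‖f x‖ = 0 := by
            rcases mul_eq_zero.mp hx0 with h' | h'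
            · exact absurd (abs_eq_zero.mp h') hxne
            · exact h'
          simp [this]
        exact hB (integral_congr_ae h0' |>.trans (by simp))
    -- main case
    set R : ℝ := Real.sqrt A2 / Real.sqrt B2 with hRdef
    have hRpos : 0 < R := div_pos (Real.sqrt_pos.mpr hA2pos) (Real.sqrt_pos.mpr hB2pos)
    have hpos : ∀ x : ℝ, 0 < 1 + (x / R) ^ 2 := fun x => by positivity
    set g : ℝ → ℝ := fun x => Real.sqrt (1 + (x / R) ^ 2) * ‖f x‖ with hgdef
    set h : ℝ → ℝ := fun x => (Real.sqrt (1 + (x / R) ^ 2))⁻¹ with hhdef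
    have hsqrtpos : ∀ x : ℝ, 0 < Real.sqrt (1 + (x / R) ^ 2) := fun x =>
      Real.sqrt_pos.mpr (hpos x)
    have hcg : Continuous g := by
      apply Continuous.mul _ hcont.norm
      exact (continuous_const.add ((continuous_id.div_const R).pow 2)).sqrt
    have hch : Continuous h := by
      apply Continuous.inv₀
      · exact (continuous_const.add ((continuous_id.div_const R).pow 2)).sqrt
      · exact fun x => (hsqrtpos x).ne'
    -- integrability of squares
    have hIh2 : Integrable (fun x : ℝ => h x ^ 2) := by
      have : (fun x : ℝ => h x ^ 2) = fun x : ℝ => (1 + (x / R) ^ 2)⁻¹ := by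
        funext x
        have eh : h x = (Real.sqrt (1 + (x / R) ^ 2))⁻¹ := rfl
        rw [eh, ← Real.sqrt_inv, Real.sq_sqrt (by positivity)]
      rw [this]
      exact integrable_inv_one_add_sq.comp_div hRpos.ne'
    have hIg2 : Integrable (fun x : ℝ => g x ^ 2) := by
      have heq : (fun x : ℝ => g x ^ 2)
          = fun x : ℝ => ‖f x‖ ^ 2 + R⁻¹ ^ 2 * (|x| * ‖f x‖) ^ 2 := by
        funext x
        have eg : g x = Real.sqrt (1 + (x / R) ^ 2) * ‖f x‖ := rfl
        rw [eg, mul_pow, Real.sq_sqrt (hpos x).le, mul_pow, sq_abs, div_pow]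
        field_simp
      rw [heq]
      exact hI2.add (hI3.const_mul _)
    have hMh : MemLp h (ENNReal.ofReal 2) volume := by
      rw [show ENNReal.ofReal 2 = 2 by norm_num]
      exact (memLp_two_iff_integrable_sq hch.aestronglyMeasurable).mpr hIh2
    have hMg : MemLp g (ENNReal.ofReal 2) volume := by
      rw [show ENNReal.ofReal 2 = 2 by norm_num]
      exact (memLp_two_iff_integrable_sq hcg.aestronglyMeasurable).mpr hIg2
    have hconj : (2 : ℝ).HolderConjugate 2 := ⟨by norm_num, by norm_num, by norm_num⟩
    have holder : ∫ x, h x * g x ≤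
        (∫ x, h x ^ (2:ℝ)) ^ ((1:ℝ)/2) * (∫ x, g x ^ (2:ℝ)) ^ ((1:ℝ)/2) :=
      integral_mul_le_Lp_mul_Lq_of_nonneg hconj
        (ae_of_all _ fun x => inv_nonneg.mpr (hsqrtpos x).le)
        (ae_of_all _ fun x => mul_nonneg (Real.sqrt_nonneg _) (norm_nonneg _))
        hMh hMg
    -- identify the left-hand side
    have hlhs : ∫ x, h x * g x = ∫ x, ‖f x‖ := by
      congr 1
      funext x
      have e : h x * g x = ‖f x‖ := by
        show (Real.sqrt (1 + (x / R) ^ 2))⁻¹ * (Real.sqrt (1 + (x / R) ^ 2) * ‖f x‖) = _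
        rw [← mul_assoc, inv_mul_cancel₀ (hsqrtpos x).ne', one_mul]
      rw [e]
    -- compute ∫ h² = R * π
    have hh2 : ∫ x, h x ^ (2:ℝ) = R * π := by
      have e1 : (fun x : ℝ => h x ^ (2:ℝ)) = fun x : ℝ => (1 + (x / R) ^ 2)⁻¹ := by
        funext x
        have eh : h x = (Real.sqrt (1 + (x / R) ^ 2))⁻¹ := rfl
        rw [Real.rpow_two, eh, ← Real.sqrt_inv, Real.sq_sqrt (by positivity)]
      rw [e1]
      have := MeasureTheory.Measure.integral_comp_div (fun y : ℝ => (1 + y ^ 2)⁻¹) R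
      simp only [smul_eq_mul] at this
      rw [this, integral_univ_inv_one_add_sq, abs_of_pos hRpos]
    -- compute ∫ g² = B2 + R⁻² A2 = 2 B2
    have hg2 : ∫ x, g x ^ (2:ℝ) = 2 * B2 := by
      have e1 : (fun x : ℝ => g x ^ (2:ℝ))
          = fun x : ℝ => ‖f x‖ ^ 2 + R⁻¹ ^ 2 * (|x| * ‖f x‖) ^ 2 := by
        funext x
        have eg : g x = Real.sqrt (1 + (x / R) ^ 2) * ‖f x‖ := rfl
        rw [Real.rpow_two, eg, mul_pow, Real.sq_sqrt (hpos x).le, mul_pow, sq_abs, div_pow]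
        field_simp
      rw [e1, integral_add hI2 (hI3.const_mul _), integral_const_mul,
        ← hA2def, ← hB2def]
      have hRsq : R ^ 2 = A2 / B2 := by
        rw [hRdef, div_pow, Real.sq_sqrt hA2nn, Real.sq_sqrt hB2nn]
      have : R⁻¹ ^ 2 * A2 = B2 := by
        rw [inv_pow, hRsq, inv_div]
        field_simp
      rw [this]; ring
    -- put everything together
    have key : (∫ x, ‖f x‖) ≤ (R * π) ^ ((1:ℝ)/2) * (2 * B2) ^ ((1:ℝ)/2) := by
      rw [← hlhs, ← hh2, ← hg2]
      exact holder
    have hfinal : (R * π) ^ ((1:ℝ)/2) * (2 * B2) ^ ((1:ℝ)/2)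
        = Real.sqrt (2 * π) * Real.sqrt (A2 ^ ((1:ℝ)/2) * B2 ^ ((1:ℝ)/2)) := by
      rw [← Real.sqrt_eq_rpow, ← Real.sqrt_eq_rpow, ← Real.sqrt_eq_rpow,
        ← Real.sqrt_eq_rpow, ← Real.sqrt_mul (by positivity : (0:ℝ) ≤ R * π),
        ← Real.sqrt_mul (by positivity : (0:ℝ) ≤ 2 * π)]
      congr 1
      have hsB : B2 = Real.sqrt B2 * Real.sqrt B2 := (Real.mul_self_sqrt hB2nn).symm
      have hRB : R * B2 = Real.sqrt A2 * Real.sqrt B2 := by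
        calc R * B2 = Real.sqrt A2 / Real.sqrt B2 * (Real.sqrt B2 * Real.sqrt B2) := by
              rw [← hsB, hRdef]
          _ = Real.sqrt A2 * Real.sqrt B2 := by
              field_simp
      linear_combination (2 * π) * hRB
    calc (∫ x, ‖f x‖) ≤ (R * π) ^ ((1:ℝ)/2) * (2 * B2) ^ ((1:ℝ)/2) := key
      _ = Real.sqrt (2 * π) * Real.sqrt (A2 ^ ((1:ℝ)/2) * B2 ^ ((1:ℝ)/2)) := hfinal
end

section
/- There exists C > 0 such that for every f ∈ H^m(ℝ²) ∩ L¹(ℝ²) with m > 3, ∫_{ℝ²} |f̂(ξ)|/√|ξ₁| dξ ≤ C(‖f‖_{L¹} + ‖f‖_{H^m}). -/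
open MeasureTheory Set ENNReal intervalIntegral

lemma two_sided (h : ℝ → ℝ≥0∞) (heven : ∀ x, h (-x) = h x) (s : Set ℝ) :
    ∫⁻ x in (fun x : ℝ => -x) ⁻¹' s ∪ s, h x ≤ 2 * ∫⁻ x in s, h x := by
  refine (lintegral_union_le _ _ _).trans ?_
  have mp : MeasurePreserving (fun x : ℝ => -x) volume volume := Measure.measurePreserving_neg _
  have emb : MeasurableEmbedding (fun x : ℝ => -x) := (Homeomorph.neg ℝ).measurableEmbedding
  have := mp.setLIntegral_comp_preimage_emb emb h s
  simp_rw [heven] at this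
  rw [this, two_mul]

lemma lint_rpow_Ioc {r : ℝ} (hr : -1 < r) (hr' : r < 0) :
    ∫⁻ x : ℝ in Icc 0 1, ENNReal.ofReal (|x| ^ r) = ENNReal.ofReal (1 / (r + 1)) := by
  rw [← setLIntegral_congr Ioc_ae_eq_Icc]
  have h1 : ∫⁻ x : ℝ in Ioc 0 1, ENNReal.ofReal (|x| ^ r)
      = ∫⁻ x : ℝ in Ioc 0 1, ENNReal.ofReal (x ^ r) := by
    refine setLIntegral_congr_fun measurableSet_Ioc (fun x hx => ?_)
    rw [abs_of_pos hx.1]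
  have hint : IntegrableOn (fun x : ℝ => x ^ r) (Ioc 0 1) := by
    have := (intervalIntegrable_rpow' (a := 0) (b := 1) hr)
    rwa [intervalIntegrable_iff_integrableOn_Ioc_of_le zero_le_one] at this
  rw [h1, ← ofReal_integral_eq_lintegral_ofReal hint ?_]
  · congr 1
    rw [← intervalIntegral.integral_of_le zero_le_one, integral_rpow (Or.inl hr)]
    rw [Real.zero_rpow (by linarith), Real.one_rpow]
    norm_num
  · exact (ae_restrict_iff' measurableSet_Ioc).2 (ae_of_all _ fun x hx => Real.rpow_nonneg hx.1.le r)
lemma lint1 : ∫⁻ x : ℝ in Icc (-1) 1, ENNReal.ofReal (|x| ^ (-(7/8) : ℝ)) ≤ 16 := by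
  have hsub : Icc (-1 : ℝ) 1 ⊆ (fun x : ℝ => -x) ⁻¹' Icc 0 1 ∪ Icc 0 1 := by
    intro x hx
    rcases le_or_gt x 0 with h | h
    · exact Or.inl ⟨by simpa using h, by simp only [mem_Icc] at hx ⊢; linarith [hx.1]⟩
    · exact Or.inr ⟨h.le, hx.2⟩
  refine (lintegral_mono_set hsub).trans ((two_sided _ (fun x => by rw [abs_neg]) _).trans ?_)
  rw [lint_rpow_Ioc (by norm_num) (by norm_num)]
  rw [show (1 : ℝ) / (-(7/8) + 1) = 8 by norm_num]
  calc (2 : ℝ≥0∞) * ENNReal.ofReal 8 ≤ 2 * 8 := by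
        gcongr; exact ENNReal.ofReal_le_of_le_toReal (by norm_num)
    _ = 16 := by norm_num

lemma lint2 : ∫⁻ y : ℝ in {y : ℝ | 1 < |y|}, ENNReal.ofReal (|y| ^ (-(3/2) : ℝ)) ≤ 4 := by
  have hsub : {y : ℝ | 1 < |y|} ⊆ (fun x : ℝ => -x) ⁻¹' Ioi 1 ∪ Ioi 1 := by
    intro x hx
    simp only [mem_setOf_eq] at hx
    rcases lt_abs.mp hx with h | h
    · exact Or.inr h
    · exact Or.inl (by simp only [mem_preimage, mem_Ioi]; linarith)
  refine (lintegral_mono_set hsub).trans ((two_sided _ (fun x => by rw [abs_neg]) _).trans ?_)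
  have key : ∫⁻ y : ℝ in Ioi 1, ENNReal.ofReal (|y| ^ (-(3/2) : ℝ)) = ENNReal.ofReal 2 := by
    have h1 : ∫⁻ y : ℝ in Ioi 1, ENNReal.ofReal (|y| ^ (-(3/2) : ℝ))
        = ∫⁻ y : ℝ in Ioi 1, ENNReal.ofReal (y ^ (-(3/2) : ℝ)) := by
      refine setLIntegral_congr_fun measurableSet_Ioi (fun x hx => ?_)
      rw [abs_of_pos (lt_trans one_pos hx)]
    have hint : IntegrableOn (fun y : ℝ => y ^ (-(3/2) : ℝ)) (Ioi 1) :=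
      integrableOn_Ioi_rpow_of_lt (by norm_num) one_pos
    rw [h1, ← ofReal_integral_eq_lintegral_ofReal hint
      ((ae_restrict_iff' measurableSet_Ioi).2 (ae_of_all _ fun x hx =>
        Real.rpow_nonneg (lt_trans one_pos hx).le _))]
    congr 1
    rw [integral_Ioi_rpow_of_lt (by norm_num) one_pos]
    norm_num
  rw [key]
  calc (2 : ℝ≥0∞) * ENNReal.ofReal 2 ≤ 2 * 2 := by
        gcongr; exact ENNReal.ofReal_le_of_le_toReal (by norm_num)
    _ = 4 := by norm_num

lemma lint3 : ∫⁻ x : ℝ, ENNReal.ofReal ((1 + x ^ 2)⁻¹) ≤ 4 := by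
  rw [← ofReal_integral_eq_lintegral_ofReal integrable_inv_one_add_sq
    (ae_of_all _ fun x => by positivity)]
  rw [integral_univ_inv_one_add_sq]
  exact ENNReal.ofReal_le_of_le_toReal (by rw [ENNReal.toReal_ofNat]; exact Real.pi_le_four)

lemma R1 {x : ℝ} (h1 : |x| ≤ 1) : (Real.sqrt |x|)⁻¹ ≤ |x| ^ (-(7/8) : ℝ) := by
  rcases eq_or_ne x 0 with rfl | hx
  · simp [Real.zero_rpow]
  · have hx0 : 0 < |x| := abs_pos.2 hx
    rw [Real.sqrt_eq_rpow, ← Real.rpow_neg (abs_nonneg x)]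
    exact Real.rpow_le_rpow_of_exponent_ge hx0 h1 (by norm_num)

lemma R2 {x y : ℝ} (h1 : |x| ≤ 1) (hy : 1 < |y|) (hxy : |x| * y ^ 4 ≤ 1) :
    (Real.sqrt |x|)⁻¹ ≤ |x| ^ (-(7/8) : ℝ) * |y| ^ (-(3/2) : ℝ) := by
  rcases eq_or_ne x 0 with rfl | hx
  · simp [Real.zero_rpow]
  · have hx0 : 0 < |x| := abs_pos.2 hx
    have hy0 : (0:ℝ) < |y| := lt_trans one_pos hy
    rw [Real.sqrt_eq_rpow, ← Real.rpow_neg (abs_nonneg x)]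
    have key : |x| ^ ((3:ℝ)/8) ≤ |y| ^ (-(3/2) : ℝ) := by
      have hle : |x| ≤ |y| ^ (-(4:ℝ)) := by
        rw [Real.rpow_neg (abs_nonneg y), show ((4:ℝ)) = ((4:ℕ):ℝ) by norm_num,
          Real.rpow_natCast, inv_eq_one_div, le_div_iff₀ (by positivity)]
        calc |x| * |y| ^ 4 = |x| * y ^ 4 := by
              rw [← abs_pow, abs_of_nonneg (by positivity : (0:ℝ) ≤ y ^ 4)]
          _ ≤ 1 := hxy
      calc |x| ^ ((3:ℝ)/8) ≤ (|y| ^ (-(4:ℝ))) ^ ((3:ℝ)/8) :=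
            Real.rpow_le_rpow (abs_nonneg x) hle (by norm_num)
        _ = |y| ^ (-(3/2) : ℝ) := by
            rw [← Real.rpow_mul (abs_nonneg y)]; norm_num
    calc |x| ^ (-(1/2) : ℝ) = |x| ^ (-(7/8) : ℝ) * |x| ^ ((3:ℝ)/8) := by
          rw [← Real.rpow_add hx0]; norm_num
      _ ≤ |x| ^ (-(7/8) : ℝ) * |y| ^ (-(3/2) : ℝ) :=
          mul_le_mul_of_nonneg_left key (Real.rpow_nonneg (abs_nonneg x) _)

lemma R3 {x y : ℝ} (h : 1 ≤ |x| ∨ 1 < |x| * y ^ 4) :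
    |x|⁻¹ * (1 + x ^ 2 + y ^ 2) ^ (-(4:ℝ)) ≤ (1 + x ^ 2)⁻¹ * (1 + y ^ 2)⁻¹ := by
  have hx0 : 0 < |x| := by
    rcases h with h | h
    · linarith
    · rcases eq_or_ne x 0 with rfl | hx
      · simp at h; linarith
      · exact abs_pos.2 hx
  have hQ : (0:ℝ) < 1 + x ^ 2 + y ^ 2 := by positivity
  have hQ1 : (1:ℝ) ≤ 1 + x ^ 2 + y ^ 2 := by nlinarith [sq_nonneg x, sq_nonneg y]
  rw [Real.rpow_neg hQ.le, show ((4:ℝ)) = ((4:ℕ):ℝ) by norm_num, Real.rpow_natCast,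
    ← mul_inv, ← mul_inv]
  have key : (1 + x ^ 2) * (1 + y ^ 2) ≤ |x| * (1 + x ^ 2 + y ^ 2) ^ 4 := by
    set Q := 1 + x ^ 2 + y ^ 2 with hQdef
    have hab : (1 + x ^ 2) * (1 + y ^ 2) ≤ Q ^ 2 := by nlinarith [sq_nonneg x, sq_nonneg y, sq_nonneg (x*y)]
    rcases h with h | h
    · have h2 : Q ^ 2 ≤ Q ^ 4 := pow_le_pow_right₀ hQ1 (by norm_num)
      calc (1 + x ^ 2) * (1 + y ^ 2) ≤ Q ^ 4 := hab.trans h2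
        _ ≤ |x| * Q ^ 4 := le_mul_of_one_le_left (by positivity) h
    · have hy4 : y ^ 4 ≤ Q ^ 2 := by nlinarith [sq_nonneg x, sq_nonneg y, sq_nonneg (x^2+y^2)]
      calc (1 + x ^ 2) * (1 + y ^ 2) = 1 * ((1 + x ^ 2) * (1 + y ^ 2)) := (one_mul _).symm
        _ ≤ (|x| * y ^ 4) * ((1 + x ^ 2) * (1 + y ^ 2)) := by
            apply mul_le_mul_of_nonneg_right h.le (by positivity)
        _ = |x| * (y ^ 4 * ((1 + x ^ 2) * (1 + y ^ 2))) := by ring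
        _ ≤ |x| * (Q ^ 2 * Q ^ 2) := by
            apply mul_le_mul_of_nonneg_left _ (abs_nonneg x)
            apply mul_le_mul hy4 hab (by positivity) (by positivity)
        _ = |x| * Q ^ 4 := by ring
  exact inv_anti₀ (by positivity) key

noncomputable def Wf (p : ℝ × ℝ) : ℝ≥0∞ := ENNReal.ofReal ((Real.sqrt |p.1|)⁻¹)
noncomputable def Qf (p : ℝ × ℝ) : ℝ≥0∞ := ENNReal.ofReal (1 + p.1 ^ 2 + p.2 ^ 2)

lemma Wf_meas : Measurable Wf :=
  ((measurable_fst.abs.sqrt).inv).ennreal_ofReal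

lemma Qf_meas : Measurable Qf :=
  ((measurable_const.add (measurable_fst.pow_const 2)).add
    (measurable_snd.pow_const 2)).ennreal_ofReal

lemma one_le_Qf (p : ℝ × ℝ) : 1 ≤ Qf p :=
  ENNReal.one_le_ofReal.2 (by nlinarith [sq_nonneg p.1, sq_nonneg p.2])

lemma Qf_ne_zero (p : ℝ × ℝ) : Qf p ≠ 0 :=
  fun h => by simpa [h] using one_le_Qf p

lemma Qf_ne_top (p : ℝ × ℝ) : Qf p ≠ ⊤ := ENNReal.ofReal_ne_top

noncomputable def uf (x : ℝ) : ℝ≥0∞ :=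
  (Icc (-1:ℝ) 1).indicator (fun x => ENNReal.ofReal (|x| ^ (-(7/8):ℝ))) x

noncomputable def vf (y : ℝ) : ℝ≥0∞ :=
  (Icc (-1:ℝ) 1).indicator 1 y
    + {y : ℝ | 1 < |y|}.indicator (fun y => ENNReal.ofReal (|y| ^ (-(3/2):ℝ))) y

lemma uf_meas : Measurable uf :=
  Measurable.indicator ((measurable_abs.pow_const _).ennreal_ofReal) measurableSet_Icc

lemma vf_meas : Measurable vf := by
  apply Measurable.add
  · exact measurable_one.indicator measurableSet_Icc
  · exact Measurable.indicator ((measurable_abs.pow_const _).ennreal_ofReal)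
      (measurableSet_lt measurable_const measurable_abs)

lemma uf_int : ∫⁻ x, uf x ≤ 16 := by
  unfold uf; rw [lintegral_indicator measurableSet_Icc _]; exact lint1

lemma vf_int : ∫⁻ y, vf y ≤ 6 := by
  unfold vf
  rw [lintegral_add_left (measurable_one.indicator measurableSet_Icc)]
  have h1 : ∫⁻ y : ℝ, (Icc (-1:ℝ) 1).indicator 1 y ≤ 2 := by
    rw [lintegral_indicator measurableSet_Icc _]
    simp only [Pi.one_apply]
    rw [setLIntegral_one, Real.volume_Icc]
    exact ENNReal.ofReal_le_of_le_toReal (by norm_num)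
  have h2 : ∫⁻ y : ℝ, {y : ℝ | 1 < |y|}.indicator
      (fun y => ENNReal.ofReal (|y| ^ (-(3/2):ℝ))) y ≤ 4 := by
    rw [lintegral_indicator (measurableSet_lt measurable_const measurable_abs) _]
    exact lint2
  calc _ ≤ (2 : ℝ≥0∞) + 4 := add_le_add h1 h2
    _ = 6 := by norm_num

def Tset : Set (ℝ × ℝ) := {p | 1 ≤ |p.1| ∨ 1 < |p.1| * p.2 ^ 4}

lemma Tset_meas : MeasurableSet Tset := by
  unfold Tset
  rw [setOf_or]
  exact (measurableSet_le measurable_const measurable_fst.abs).union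
    (measurableSet_lt measurable_const (measurable_fst.abs.mul (measurable_snd.pow_const 4)))

lemma pointwise_Tc (p : ℝ × ℝ) : Tsetᶜ.indicator Wf p ≤ uf p.1 * vf p.2 := by
  by_cases hp : p ∈ Tsetᶜ
  · rw [indicator_of_mem hp]
    simp only [Tset, mem_compl_iff, mem_setOf_eq, not_or, not_le, not_lt] at hp
    obtain ⟨hx1, hx2⟩ := hp
    have hu : uf p.1 = ENNReal.ofReal (|p.1| ^ (-(7/8):ℝ)) :=
      indicator_of_mem (by rw [mem_Icc, ← abs_le]; exact hx1.le) _
    by_cases hy : |p.2| ≤ 1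
    · have hv : 1 ≤ vf p.2 := by
        unfold vf
        rw [indicator_of_mem (by rw [mem_Icc, ← abs_le]; exact hy)]
        exact le_add_right le_rfl
      calc Wf p ≤ uf p.1 := by
            rw [hu]; exact ENNReal.ofReal_le_ofReal (R1 hx1.le)
        _ = uf p.1 * 1 := (mul_one _).symm
        _ ≤ uf p.1 * vf p.2 := mul_le_mul_right hv _
    · push_neg at hy
      have hv : ENNReal.ofReal (|p.2| ^ (-(3/2):ℝ)) ≤ vf p.2 := by
        unfold vf
        rw [indicator_of_mem (by exact hy : p.2 ∈ {y : ℝ | 1 < |y|})]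
        exact le_add_self
      calc Wf p ≤ ENNReal.ofReal (|p.1| ^ (-(7/8):ℝ) * |p.2| ^ (-(3/2):ℝ)) :=
            ENNReal.ofReal_le_ofReal (R2 hx1.le hy hx2)
        _ = uf p.1 * ENNReal.ofReal (|p.2| ^ (-(3/2):ℝ)) := by
            rw [hu, ENNReal.ofReal_mul (Real.rpow_nonneg (abs_nonneg _) _)]
        _ ≤ uf p.1 * vf p.2 := mul_le_mul_right hv _
  · rw [indicator_of_notMem hp]; exact zero_le

lemma part_Tc (G : ℝ × ℝ → ℝ≥0∞) (A : ℝ≥0∞) (hGA : ∀ p, G p ≤ A) :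
    ∫⁻ p in Tsetᶜ, G p * Wf p ≤ 96 * A := by
  calc ∫⁻ p in Tsetᶜ, G p * Wf p ≤ ∫⁻ p in Tsetᶜ, A * Wf p :=
        lintegral_mono fun p => mul_le_mul_left (hGA p) _
    _ = A * ∫⁻ p in Tsetᶜ, Wf p := lintegral_const_mul A Wf_meas
    _ ≤ A * ∫⁻ p : ℝ × ℝ, uf p.1 * vf p.2 := by
        apply mul_le_mul_right
        rw [← lintegral_indicator Tset_meas.compl]
        exact lintegral_mono pointwise_Tc
    _ = A * ((∫⁻ x, uf x) * ∫⁻ y, vf y) := by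
        rw [MeasureTheory.Measure.volume_eq_prod, MeasureTheory.lintegral_prod_mul uf_meas.aemeasurable vf_meas.aemeasurable]
    _ ≤ A * (16 * 6) := by
        apply mul_le_mul_right
        exact mul_le_mul' uf_int vf_int
    _ = 96 * A := by rw [mul_comm]; norm_num

lemma sixteen_rpow_half : (16 : ℝ≥0∞) ^ ((1:ℝ)/2) = 4 := by
  rw [show (16:ℝ≥0∞) = (4:ℝ≥0∞) ^ (2:ℝ) by
    rw [show (2:ℝ) = ((2:ℕ):ℝ) by norm_num, ENNReal.rpow_natCast]; norm_num]
  rw [← ENNReal.rpow_mul]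
  norm_num

lemma part_T (G : ℝ × ℝ → ℝ≥0∞) (hG : Measurable G) (m : ℕ) (hm : 4 ≤ m) :
    ∫⁻ p in Tset, G p * Wf p ≤ 4 * (∫⁻ p, Qf p ^ m * G p ^ 2) ^ ((1:ℝ)/2) := by
  set f1 : ℝ × ℝ → ℝ≥0∞ := fun p => G p * Qf p ^ ((m:ℝ)/2) with hf1def
  set g1 : ℝ × ℝ → ℝ≥0∞ := Tset.indicator (fun p => Wf p * Qf p ^ (-((m:ℝ)/2))) with hg1def
  have hf1m : Measurable f1 := hG.mul (Qf_meas.pow measurable_const)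
  have hg1m : Measurable g1 :=
    ((Wf_meas.mul (Qf_meas.pow measurable_const))).indicator Tset_meas
  have key : ∀ p, Tset.indicator (fun p => G p * Wf p) p = (f1 * g1) p := by
    intro p
    by_cases hp : p ∈ Tset
    · rw [indicator_of_mem hp, Pi.mul_apply, hf1def, hg1def, indicator_of_mem hp]
      have hQ : Qf p ^ ((m:ℝ)/2) * Qf p ^ (-((m:ℝ)/2)) = 1 := by
        rw [← ENNReal.rpow_add _ _ (Qf_ne_zero p) (Qf_ne_top p)]
        simp
      calc G p * Wf p = G p * Wf p * (Qf p ^ ((m:ℝ)/2) * Qf p ^ (-((m:ℝ)/2))) := by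
            rw [hQ, mul_one]
        _ = G p * Qf p ^ ((m:ℝ)/2) * (Wf p * Qf p ^ (-((m:ℝ)/2))) := by ring
    · rw [indicator_of_notMem hp, Pi.mul_apply, hg1def, indicator_of_notMem hp, mul_zero]
  have hCS := ENNReal.lintegral_mul_le_Lp_mul_Lq volume
    Real.HolderConjugate.two_two hf1m.aemeasurable hg1m.aemeasurable
  have hf2 : ∫⁻ p, f1 p ^ (2:ℝ) = ∫⁻ p, Qf p ^ m * G p ^ 2 := by
    apply lintegral_congr; intro p
    rw [hf1def]
    have h1 : (Qf p ^ ((m:ℝ)/2)) ^ (2:ℝ) = Qf p ^ (m:ℕ) := by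
      rw [← ENNReal.rpow_natCast (Qf p) m, ← ENNReal.rpow_mul]
      congr 1; field_simp
    have h2 : G p ^ (2:ℝ) = G p ^ (2:ℕ) := by
      rw [← ENNReal.rpow_natCast (G p) 2]; norm_num
    rw [ENNReal.mul_rpow_of_nonneg _ _ (by norm_num : (0:ℝ) ≤ 2), h1, h2, mul_comm]
  have hg2 : ∫⁻ p, g1 p ^ (2:ℝ) ≤ 16 := by
    have hpt : ∀ p, g1 p ^ (2:ℝ) ≤
        ENNReal.ofReal ((1+p.1^2)⁻¹) * ENNReal.ofReal ((1+p.2^2)⁻¹) := by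
      intro p
      by_cases hp : p ∈ Tset
      · rw [hg1def, indicator_of_mem hp,
          ENNReal.mul_rpow_of_nonneg _ _ (by norm_num : (0:ℝ) ≤ 2), ← ENNReal.rpow_mul]
        have e1 : Wf p ^ (2:ℝ) = ENNReal.ofReal (|p.1|⁻¹) := by
          unfold Wf
          rw [ENNReal.ofReal_rpow_of_nonneg (inv_nonneg.2 (Real.sqrt_nonneg _))
            (by norm_num : (0:ℝ) ≤ 2)]
          congr 1
          rw [show ((2:ℝ)) = ((2:ℕ):ℝ) by norm_num, Real.rpow_natCast, inv_pow,
            Real.sq_sqrt (abs_nonneg _)]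
        have e2 : Qf p ^ (-((m:ℝ)/2) * 2) ≤
            ENNReal.ofReal ((1+p.1^2+p.2^2) ^ (-(4:ℝ))) := by
          rw [show -((m:ℝ)/2) * 2 = -(m:ℝ) by ring]
          have step : Qf p ^ (-(m:ℝ)) ≤ Qf p ^ (-(4:ℝ)) :=
            ENNReal.rpow_le_rpow_of_exponent_le (one_le_Qf p)
              (neg_le_neg (by exact_mod_cast hm))
          refine step.trans (le_of_eq ?_)
          unfold Qf
          rw [ENNReal.ofReal_rpow_of_pos (by positivity)]
        calc Wf p ^ (2:ℝ) * Qf p ^ (-((m:ℝ)/2) * 2)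
            ≤ ENNReal.ofReal (|p.1|⁻¹) * ENNReal.ofReal ((1+p.1^2+p.2^2) ^ (-(4:ℝ))) := by
              rw [e1]; exact mul_le_mul_right e2 _
          _ = ENNReal.ofReal (|p.1|⁻¹ * (1+p.1^2+p.2^2) ^ (-(4:ℝ))) :=
              (ENNReal.ofReal_mul (inv_nonneg.2 (abs_nonneg _))).symm
          _ ≤ ENNReal.ofReal ((1+p.1^2)⁻¹ * (1+p.2^2)⁻¹) :=
              ENNReal.ofReal_le_ofReal (R3 hp)
          _ = ENNReal.ofReal ((1+p.1^2)⁻¹) * ENNReal.ofReal ((1+p.2^2)⁻¹) :=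
              ENNReal.ofReal_mul (by positivity)
      · rw [hg1def, indicator_of_notMem hp, ENNReal.zero_rpow_of_pos (by norm_num)]
        exact zero_le
    calc ∫⁻ p, g1 p ^ (2:ℝ)
        ≤ ∫⁻ p : ℝ × ℝ, ENNReal.ofReal ((1+p.1^2)⁻¹) * ENNReal.ofReal ((1+p.2^2)⁻¹) :=
          lintegral_mono hpt
      _ = (∫⁻ x : ℝ, ENNReal.ofReal ((1+x^2)⁻¹)) * ∫⁻ y : ℝ, ENNReal.ofReal ((1+y^2)⁻¹) := by
          have hm1 : Measurable fun x : ℝ => ENNReal.ofReal ((1 + x ^ 2)⁻¹) :=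
            ((measurable_const.add (measurable_id.pow_const 2)).inv).ennreal_ofReal
          rw [MeasureTheory.Measure.volume_eq_prod,
            MeasureTheory.lintegral_prod_mul hm1.aemeasurable hm1.aemeasurable]
      _ ≤ 4 * 4 := mul_le_mul' lint3 lint3
      _ = 16 := by norm_num
  calc ∫⁻ p in Tset, G p * Wf p = ∫⁻ p, (f1 * g1) p := by
        rw [← lintegral_indicator Tset_meas]; exact lintegral_congr key
    _ ≤ (∫⁻ p, f1 p ^ (2:ℝ)) ^ ((1:ℝ)/2) * (∫⁻ p, g1 p ^ (2:ℝ)) ^ ((1:ℝ)/2) := hCS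
    _ ≤ (∫⁻ p, Qf p ^ m * G p ^ 2) ^ ((1:ℝ)/2) * (16:ℝ≥0∞) ^ ((1:ℝ)/2) := by
        rw [hf2]
        exact mul_le_mul_right (ENNReal.rpow_le_rpow hg2 (by norm_num)) _
    _ = 4 * (∫⁻ p, Qf p ^ m * G p ^ 2) ^ ((1:ℝ)/2) := by
        rw [sixteen_rpow_half, mul_comm]

lemma core (G : ℝ × ℝ → ℝ≥0∞) (hG : Measurable G) (A : ℝ≥0∞) (hGA : ∀ p, G p ≤ A)
    (m : ℕ) (hm : 4 ≤ m) :
    ∫⁻ p, G p * Wf p ≤ 96 * A + 4 * (∫⁻ p, Qf p ^ m * G p ^ 2) ^ ((1:ℝ)/2) := by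
  rw [← lintegral_add_compl (fun p => G p * Wf p) Tset_meas]
  rw [add_comm (96 * A)]
  exact add_le_add (part_T G hG m hm) (part_Tc G A hGA)

noncomputable def ψ : EuclideanSpace ℝ (Fin 2) ≃ᵐ ℝ × ℝ :=
  (MeasurableEquiv.toLp 2 (Fin 2 → ℝ)).symm.trans MeasurableEquiv.finTwoArrow

lemma ψ_mp : MeasurePreserving ψ volume volume :=
  (volume_preserving_finTwoArrow ℝ).comp (EuclideanSpace.volume_preserving_symm_measurableEquiv_toLp _)

lemma ψ_symm_zero (p : ℝ × ℝ) : ψ.symm p 0 = p.1 := rfl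

lemma norm_ψ_symm_sq (p : ℝ × ℝ) : ‖ψ.symm p‖ ^ 2 = p.1 ^ 2 + p.2 ^ 2 := by
  rw [EuclideanSpace.norm_eq]
  rw [Real.sq_sqrt (by positivity)]
  simp [Fin.sum_univ_two]
  rfl

/-- For `f ∈ H^m(ℝ²) ∩ L¹(ℝ²)` with `m > 3`:
`∫ |f̂(ξ)|/√|ξ₁| dξ ≤ C (‖f‖_{L¹} + ‖f‖_{H^m})` with `C` uniform. -/
theorem stmt19 : ∃ C > 0, ∀ m : ℕ, 3 < m → ∀ f : EuclideanSpace ℝ (Fin 2) → ℂ,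
    Integrable f →
    Integrable (fun ξ => (1 + ‖ξ‖ ^ 2) ^ m * ‖FourierTransform.fourier f ξ‖ ^ 2) →
    (∫ ξ : EuclideanSpace ℝ (Fin 2), ‖FourierTransform.fourier f ξ‖ / Real.sqrt |ξ 0|) ≤
      C * ((∫ x, ‖f x‖) +
        (∫ ξ, (1 + ‖ξ‖ ^ 2) ^ m * ‖FourierTransform.fourier f ξ‖ ^ 2) ^ ((1 : ℝ) / 2)) := by
  refine ⟨96, by norm_num, ?_⟩
  intro m hm f hf hf2
  set F := FourierTransform.fourier f with hFdef
  have hFc : Continuous F :=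
    VectorFourier.fourierIntegral_continuous Real.continuous_fourierChar
      (by exact continuous_inner) hf
  have hcoord : Continuous fun ξ : EuclideanSpace ℝ (Fin 2) => ξ 0 :=
    (EuclideanSpace.proj (0 : Fin 2)).continuous
  set N1 := ∫ x, ‖f x‖ with hN1
  set I2 := ∫ ξ, (1 + ‖ξ‖ ^ 2) ^ m * ‖F ξ‖ ^ 2 with hI2
  have hN1nn : 0 ≤ N1 := integral_nonneg fun x => norm_nonneg _
  have hI2nn : 0 ≤ I2 := integral_nonneg fun ξ => by positivity
  set G : ℝ × ℝ → ℝ≥0∞ := fun p => ENNReal.ofReal ‖F (ψ.symm p)‖ with hGdef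
  have hGmeas : Measurable G :=
    ((hFc.norm.measurable).comp ψ.symm.measurable).ennreal_ofReal
  have hGA : ∀ p, G p ≤ ENNReal.ofReal N1 := fun p =>
    ENNReal.ofReal_le_ofReal (VectorFourier.norm_fourierIntegral_le_integral_norm _ _ _ _ _)
  have hnn : 0 ≤ᵐ[volume] fun ξ : EuclideanSpace ℝ (Fin 2) => ‖F ξ‖ / Real.sqrt |ξ 0| :=
    ae_of_all _ fun ξ => by positivity
  have hsm : AEStronglyMeasurable
      (fun ξ : EuclideanSpace ℝ (Fin 2) => ‖F ξ‖ / Real.sqrt |ξ 0|) volume :=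
    (hFc.norm.measurable.div (hcoord.abs.measurable.sqrt)).aestronglyMeasurable
  rw [MeasureTheory.integral_eq_lintegral_of_nonneg_ae hnn hsm]
  have hmeasE : Measurable fun ξ : EuclideanSpace ℝ (Fin 2) =>
      ENNReal.ofReal (‖F ξ‖ / Real.sqrt |ξ 0|) :=
    (hFc.norm.measurable.div (hcoord.abs.measurable.sqrt)).ennreal_ofReal
  have htrans : ∫⁻ ξ : EuclideanSpace ℝ (Fin 2), ENNReal.ofReal (‖F ξ‖ / Real.sqrt |ξ 0|)
      = ∫⁻ p : ℝ × ℝ, G p * Wf p := by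
    rw [← (MeasurePreserving.symm ψ ψ_mp).lintegral_comp hmeasE]
    apply lintegral_congr
    intro p
    rw [ψ_symm_zero, div_eq_mul_inv, ENNReal.ofReal_mul (norm_nonneg _)]
    rfl
  have hB : (∫⁻ p, Qf p ^ m * G p ^ 2) = ENNReal.ofReal I2 := by
    have hmeasE2 : Measurable fun ξ : EuclideanSpace ℝ (Fin 2) =>
        ENNReal.ofReal ((1 + ‖ξ‖ ^ 2) ^ m * ‖F ξ‖ ^ 2) :=
      (((continuous_const.add (continuous_norm.pow 2)).pow m).mul
        (hFc.norm.pow 2)).measurable.ennreal_ofReal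
    rw [hI2, ofReal_integral_eq_lintegral_ofReal hf2 (ae_of_all _ fun ξ => by positivity)]
    rw [← (MeasurePreserving.symm ψ ψ_mp).lintegral_comp hmeasE2]
    apply lintegral_congr
    intro p
    rw [norm_ψ_symm_sq, ENNReal.ofReal_mul (by positivity),
      ENNReal.ofReal_pow (by positivity), ENNReal.ofReal_pow (norm_nonneg _)]
    congr 2
    unfold Qf
    congr 1
    ring
  rw [htrans]
  have hcore := core G hGmeas (ENNReal.ofReal N1) hGA m hm
  rw [hB, ENNReal.ofReal_rpow_of_nonneg hI2nn (by norm_num)] at hcore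
  have hbound : (∫⁻ p, G p * Wf p) ≤ ENNReal.ofReal (96 * N1 + 4 * I2 ^ ((1:ℝ)/2)) := by
    refine hcore.trans (le_of_eq ?_)
    rw [ENNReal.ofReal_add (mul_nonneg (by norm_num) hN1nn)
        (mul_nonneg (by norm_num) (Real.rpow_nonneg hI2nn _)),
      ENNReal.ofReal_mul (by norm_num : (0:ℝ) ≤ 96),
      ENNReal.ofReal_mul (by norm_num : (0:ℝ) ≤ 4),
      ENNReal.ofReal_ofNat, ENNReal.ofReal_ofNat]
  refine (ENNReal.toReal_le_of_le_ofReal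
    (by positivity) hbound).trans ?_
  have hrnn : 0 ≤ I2 ^ ((1:ℝ)/2) := Real.rpow_nonneg hI2nn _
  nlinarith
end
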